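/- arXiv:1611.08478 — 2 statements merged into one kernel-verified Lean document; each statement's English description precedes it below -/
import Mathlib

section
/- Conversely, if a smooth vector field v: ℝ³ → ℝ³ satisfies x₂ ∂₁v - x₁ ∂₂v + ∂₃v = (v₂, -v₁, 0) everywhere, then v is helical: v(S_θ(x)) = R_θ v(x) for all θ ∈ ℝ and x ∈ ℝ³. -/
open Real

/-!
Along the helix `t ↦ S_t x`, whose velocity is `(S_t x)^⊥ + e₃`, the equation says that
`w t = v (S_t x)` solves the linear ODE `w' = w^⊥`. The rotated vectors `t ↦ R_t (v x)` solve the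
same ODE with the same value at `t = 0`, so the two curves coincide by uniqueness of solutions to
Lipschitz ODEs.
-/

/-- The helical transformation `S_θ`. -/
noncomputable def helS (θ : ℝ) (x : Fin 3 → ℝ) : Fin 3 → ℝ :=
  ![x 0 * Real.cos θ + x 1 * Real.sin θ, -(x 0) * Real.sin θ + x 1 * Real.cos θ, x 2 + θ]

/-- Rotation by angle `θ` about the `x₃`-axis, acting on vectors. -/
noncomputable def helR (θ : ℝ) (v : Fin 3 → ℝ) : Fin 3 → ℝ :=
  ![v 0 * Real.cos θ + v 1 * Real.sin θ, -(v 0) * Real.sin θ + v 1 * Real.cos θ, v 2]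

/-- `v^⊥`, as a continuous linear map so that it is Lipschitz. -/
noncomputable def perp : (Fin 3 → ℝ) →L[ℝ] (Fin 3 → ℝ) :=
  LinearMap.toContinuousLinearMap
    { toFun := fun u => ![u 1, -(u 0), 0]
      map_add' := fun u w => by funext i; fin_cases i <;> simp [add_comm]
      map_smul' := fun c u => by funext i; fin_cases i <;> simp }

theorem perp_apply (u : Fin 3 → ℝ) : perp u = ![u 1, -(u 0), 0] := rfl

theorem helR_zero (u : Fin 3 → ℝ) : helR 0 u = u := by
  funext i; fin_cases i <;> simp [helR]

theorem hasDerivAt_helR (u : Fin 3 → ℝ) (θ : ℝ) :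
    HasDerivAt (fun t => helR t u) (perp (helR θ u)) θ := by
  refine hasDerivAt_pi.2 fun i => ?_
  fin_cases i <;> simp only [helR, perp_apply, Fin.reduceFinMk, Matrix.cons_val, neg_mul]
  · convert ((hasDerivAt_cos θ).const_mul (u 0)).fun_add ((hasDerivAt_sin θ).const_mul (u 1))
      using 1
    ring
  · convert ((hasDerivAt_sin θ).const_mul (u 0)).fun_neg.fun_add
      ((hasDerivAt_cos θ).const_mul (u 1)) using 1
    ring
  · exact hasDerivAt_const θ (u 2)

theorem eq_helR_of_hasDerivAt_perp {w : ℝ → Fin 3 → ℝ} (hw : ∀ t, HasDerivAt w (perp (w t)) t)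
    (θ : ℝ) : w θ = helR θ (w 0) := by
  have hunique := ODE_solution_unique_univ (v := fun _ => perp) (s := fun _ => Set.univ) (t₀ := 0)
    (fun _ => perp.lipschitz.lipschitzOnWith) (fun t => ⟨hw t, Set.mem_univ _⟩)
    (fun t => ⟨hasDerivAt_helR (w 0) t, Set.mem_univ _⟩) (helR_zero (w 0)).symm
  exact congrFun hunique θ

theorem helS_zero (x : Fin 3 → ℝ) : helS 0 x = x := by
  funext i; fin_cases i <;> simp [helS]

theorem hasDerivAt_helS (x : Fin 3 → ℝ) (θ : ℝ) :
    HasDerivAt (fun t => helS t x) (perp (helS θ x) + Pi.single 2 1) θ := by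
  refine hasDerivAt_pi.2 fun i => ?_
  fin_cases i <;>
    simp only [helS, perp_apply, Fin.reduceFinMk, Matrix.cons_val, Pi.add_apply, Pi.single_apply,
      Fin.reduceEq, if_true, if_false, add_zero, zero_add, neg_mul]
  · convert ((hasDerivAt_cos θ).const_mul (x 0)).fun_add ((hasDerivAt_sin θ).const_mul (x 1))
      using 1
    ring
  · convert ((hasDerivAt_sin θ).const_mul (x 0)).fun_neg.fun_add
      ((hasDerivAt_cos θ).const_mul (x 1)) using 1
    ring
  · exact (hasDerivAt_id θ).const_add (x 2)

theorem perp_add_single_two (y : Fin 3 → ℝ) :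
    perp y + Pi.single 2 1 = y 1 • Pi.single 0 1 - y 0 • Pi.single 1 1 + Pi.single 2 1 := by
  funext i; fin_cases i <;> simp [perp_apply]

theorem hasDerivAt_comp_helS {v : (Fin 3 → ℝ) → (Fin 3 → ℝ)} (hv : Differentiable ℝ v)
    (hxi : ∀ y, fderiv ℝ v y (perp y + Pi.single 2 1) = perp (v y)) (x : Fin 3 → ℝ) (θ : ℝ) :
    HasDerivAt (fun t => v (helS t x)) (perp (v (helS θ x))) θ := by
  rw [← hxi]
  exact (hv _).hasFDerivAt.comp_hasDerivAt θ (hasDerivAt_helS x θ)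

/-- If a smooth vector field `v` satisfies `x₂ ∂₁ v - x₁ ∂₂ v + ∂₃ v = (v₂, -v₁, 0)`
everywhere, then `v` is helical. -/
theorem xi_derivative_implies_helical
    (v : (Fin 3 → ℝ) → (Fin 3 → ℝ)) (hv : ContDiff ℝ 1 v)
    (hxi : ∀ x : Fin 3 → ℝ,
      x 1 • fderiv ℝ v x (Pi.single 0 1) - x 0 • fderiv ℝ v x (Pi.single 1 1)
        + fderiv ℝ v x (Pi.single 2 1) = ![v x 1, -(v x 0), 0]) :
    ∀ (θ : ℝ) (x : Fin 3 → ℝ), v (helS θ x) = helR θ (v x) := by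
  intro θ x
  have hxi_perp (y : Fin 3 → ℝ) : fderiv ℝ v y (perp y + Pi.single 2 1) = perp (v y) := by
    rw [perp_add_single_two, map_add, map_sub, map_smul, map_smul]
    exact hxi y
  have h := eq_helR_of_hasDerivAt_perp
    (hasDerivAt_comp_helS (hv.differentiable one_ne_zero) hxi_perp x) θ
  rwa [helS_zero] at h
end

section
/- Ladyzhenskaya-type inequality for helical functions: if u ∈ H¹(D) is a helical function on D = B₁ × [0, 2π] (B₁ the unit disk) vanishing on the lateral boundary, then ‖u‖_{L⁴(D)} ≤ C ‖u‖_{L²(D)}^{1/2} ‖∇_h u‖_{L²(D)}^{1/2}, where ∇_h = (∂_{x₁}, ∂_{x₂}) and C is an absolute constant. -/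
/-!
A helical function is determined by its trace on the disk `{x₃ = 0}`: the slice at height `z` is
that trace composed with the rotation by `z`, and rotations preserve the disk and Lebesgue measure,
so the integral over `D` of a helical function is `2π` times the integral of its trace over the
unit disk. The horizontal gradient `|∇_h u|²` is again helical, so everything reduces to the
two-dimensional Ladyzhenskaya inequality `∫ W⁴ ≤ 2 ∫ W² ∫ |∇W|²` on the unit disk for `W` vanishing
on the circle, with `C = 1` because `2 ≤ 2π`.

That inequality is the chord argument: `W(a, b)²` is at most `∫ 2 |W| |∂₁W|` over the horizontal
chord through `(a, b)`, and at most `∫ 2 |W| |∂₂W|` over the vertical one. Multiplying the two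
bounds gives `W⁴ ≤ G(a) F(b)`, which integrates by Fubini to a product of two integrals, each
controlled by Cauchy–Schwarz.
-/

open Real MeasureTheory

/-- The helical cylinder `D = B₁ × (0, 2π)`. -/
def helD : Set (Fin 3 → ℝ) :=
  {x | x 0 ^ 2 + x 1 ^ 2 < 1 ∧ 0 < x 2 ∧ x 2 < 2 * Real.pi}

open Set

theorem integral_abs_mul_abs_le_sqrt_mul_sqrt {α : Type*} [MeasurableSpace α] {μ : Measure α}
    {f g : α → ℝ} (hf : MemLp f 2 μ) (hg : MemLp g 2 μ) :
    ∫ x, |f x| * |g x| ∂μ ≤ √(∫ x, f x ^ 2 ∂μ) * √(∫ x, g x ^ 2 ∂μ) := by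
  have H := integral_mul_norm_le_Lp_mul_Lq Real.HolderConjugate.two_two
    (by simpa using hf) (by simpa using hg)
  simpa only [Real.norm_eq_abs, Real.rpow_two, sq_abs, ← Real.sqrt_eq_rpow] using H

theorem sq_le_setIntegral_Ioo_of_eq_zero {g g' : ℝ → ℝ} (hg : ∀ t, HasDerivAt g (g' t) t)
    (hg' : Continuous g') {c a d : ℝ} (hc : g c = 0) (hca : c ≤ a) (had : a ≤ d) :
    g a ^ 2 ≤ ∫ t in Ioo c d, 2 * |g t| * |g' t| := by
  have hcont : Continuous g := continuous_iff_continuousAt.2 fun t => (hg t).continuousAt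
  have hderiv : Continuous fun t => 2 * g t * g' t := by fun_prop
  have habs : Continuous fun t => 2 * |g t| * |g' t| := by fun_prop
  calc g a ^ 2 = ∫ t in c..a, 2 * g t * g' t := by
        rw [intervalIntegral.integral_eq_sub_of_hasDerivAt
          (fun t _ => by simpa using (hg t).pow 2) (hderiv.intervalIntegrable _ _)]
        simp [hc]
    _ ≤ ∫ t in c..a, 2 * |g t| * |g' t| := by
        refine intervalIntegral.integral_mono_on hca (hderiv.intervalIntegrable _ _)
          (habs.intervalIntegrable _ _) fun t _ => ?_
        rw [mul_assoc, mul_assoc, ← abs_mul]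
        gcongr
        exact le_abs_self _
    _ ≤ ∫ t in c..d, 2 * |g t| * |g' t| :=
        intervalIntegral.integral_mono_interval le_rfl hca had
          (ae_of_all _ fun t => by positivity) (habs.intervalIntegrable _ _)
    _ = ∫ t in Ioo c d, 2 * |g t| * |g' t| := by
        rw [intervalIntegral.integral_of_le (hca.trans had), integral_Ioc_eq_integral_Ioo]

theorem setIntegral_pow_four_le_mul {α β : Type*} [MeasurableSpace α] [MeasurableSpace β]
    {μ : Measure α} {ν : Measure β} [SFinite μ] [SFinite ν] {s : Set (α × β)}
    (hs : MeasurableSet s) {f φ ψ : α × β → ℝ} (hφ : Integrable φ (μ.prod ν))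
    (hψ : Integrable ψ (μ.prod ν)) (hφ₀ : 0 ≤ φ) (hψ₀ : 0 ≤ ψ)
    (hfφ : ∀ p ∈ s, f p ^ 2 ≤ ∫ a, φ (a, p.2) ∂μ)
    (hfψ : ∀ p ∈ s, f p ^ 2 ≤ ∫ b, ψ (p.1, b) ∂ν) :
    ∫ p in s, f p ^ 4 ∂(μ.prod ν) ≤ (∫ p, φ p ∂(μ.prod ν)) * ∫ p, ψ p ∂(μ.prod ν) := by
  set F : β → ℝ := fun b => ∫ a, φ (a, b) ∂μ
  set G : α → ℝ := fun a => ∫ b, ψ (a, b) ∂ν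
  have hF₀ : 0 ≤ F := fun b => integral_nonneg fun a => hφ₀ _
  have hG₀ : 0 ≤ G := fun a => integral_nonneg fun b => hψ₀ _
  have hGF : Integrable (fun p : α × β => G p.1 * F p.2) (μ.prod ν) :=
    hψ.integral_prod_left.mul_prod hφ.integral_prod_right
  calc ∫ p in s, f p ^ 4 ∂(μ.prod ν) ≤ ∫ p in s, G p.1 * F p.2 ∂(μ.prod ν) := by
        refine integral_mono_of_nonneg (ae_of_all _ fun p => by positivity) hGF.integrableOn
          (ae_restrict_of_forall_mem hs fun p hp => ?_)
        calc f p ^ 4 = f p ^ 2 * f p ^ 2 := by ring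
          _ ≤ G p.1 * F p.2 := mul_le_mul (hfψ p hp) (hfφ p hp) (sq_nonneg _) (hG₀ _)
    _ ≤ ∫ p, G p.1 * F p.2 ∂(μ.prod ν) :=
        setIntegral_le_integral hGF (ae_of_all _ fun p => mul_nonneg (hG₀ _) (hF₀ _))
    _ = (∫ p, φ p ∂(μ.prod ν)) * ∫ p, ψ p ∂(μ.prod ν) := by
        rw [integral_prod_mul G F, integral_prod _ hψ, integral_prod_symm _ hφ, mul_comm]

theorem sq_le_setIntegral_sq_lt_of_eq_zero {g g' : ℝ → ℝ} (hg : ∀ t, HasDerivAt g (g' t) t)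
    (hg' : Continuous g') {ρ a : ℝ} (ha : a ^ 2 < ρ) (hg₀ : g (-√ρ) = 0) :
    g a ^ 2 ≤ ∫ t in {t | t ^ 2 < ρ}, 2 * |g t| * |g' t| := by
  have hchord : {t : ℝ | t ^ 2 < ρ} = Ioo (-√ρ) √ρ := by
    ext t
    simp [Real.sq_lt]
  rw [hchord]
  exact sq_le_setIntegral_Ioo_of_eq_zero hg hg' hg₀ (Real.neg_sqrt_lt_of_sq_lt ha).le
    (Real.lt_sqrt_of_sq_lt ha).le

def unitDisk : Set (ℝ × ℝ) := {p | p.1 ^ 2 + p.2 ^ 2 < 1}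

theorem measurableSet_unitDisk : MeasurableSet unitDisk :=
  measurableSet_lt (by fun_prop) (by fun_prop)

theorem unitDisk_subset_Icc : unitDisk ⊆ Icc (-1, -1) (1, 1) := by
  rintro ⟨a, b⟩ (h : a ^ 2 + b ^ 2 < 1)
  simp only [mem_Icc, Prod.mk_le_mk]
  refine ⟨⟨?_, ?_⟩, ?_, ?_⟩ <;> nlinarith [sq_nonneg a, sq_nonneg b]

theorem Continuous.integrableOn_unitDisk {f : ℝ × ℝ → ℝ} (hf : Continuous f) :
    IntegrableOn f unitDisk :=
  (hf.continuousOn.integrableOn_compact isCompact_Icc).mono_set unitDisk_subset_Icc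

theorem sq_le_integral_indicator_unitDisk_horizontal {W : ℝ × ℝ → ℝ} (hW : ContDiff ℝ 1 W)
    (hW₀ : ∀ p : ℝ × ℝ, p.1 ^ 2 + p.2 ^ 2 = 1 → W p = 0) {p : ℝ × ℝ} (hp : p ∈ unitDisk) :
    W p ^ 2 ≤ ∫ t, unitDisk.indicator (fun q => 2 * |W q| * |fderiv ℝ W q (1, 0)|) (t, p.2) := by
  obtain ⟨a, b⟩ := p
  have hslice : (fun t => (t, b)) ⁻¹' unitDisk = {t | t ^ 2 < 1 - b ^ 2} := by
    ext t
    simp [unitDisk, lt_sub_iff_add_lt]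
  simp_rw [← indicator_comp_right (fun t => (t, b)), hslice]
  rw [integral_indicator (measurableSet_lt (by fun_prop) (by fun_prop))]
  refine sq_le_setIntegral_sq_lt_of_eq_zero (g := fun t => W (t, b))
    (fun t => (hW.differentiable one_ne_zero _).hasFDerivAt.comp_hasDerivAt t
      ((hasDerivAt_id t).prodMk (hasDerivAt_const t b)))
    (by have := hW.continuous_fderiv one_ne_zero; fun_prop) (lt_sub_iff_add_lt.2 hp) (hW₀ _ ?_)
  have hb : b ^ 2 ≤ 1 := by nlinarith [hp.out]
  simp [Real.sq_sqrt (sub_nonneg.2 hb)]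

theorem sq_le_integral_indicator_unitDisk_vertical {W : ℝ × ℝ → ℝ} (hW : ContDiff ℝ 1 W)
    (hW₀ : ∀ p : ℝ × ℝ, p.1 ^ 2 + p.2 ^ 2 = 1 → W p = 0) {p : ℝ × ℝ} (hp : p ∈ unitDisk) :
    W p ^ 2 ≤ ∫ t, unitDisk.indicator (fun q => 2 * |W q| * |fderiv ℝ W q (0, 1)|) (p.1, t) := by
  obtain ⟨a, b⟩ := p
  have hslice : (fun t => (a, t)) ⁻¹' unitDisk = {t | t ^ 2 < 1 - a ^ 2} := by
    ext t
    simp [unitDisk, lt_sub_iff_add_lt']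
  simp_rw [← indicator_comp_right (fun t => (a, t)), hslice]
  rw [integral_indicator (measurableSet_lt (by fun_prop) (by fun_prop))]
  refine sq_le_setIntegral_sq_lt_of_eq_zero (g := fun t => W (a, t))
    (fun t => (hW.differentiable one_ne_zero _).hasFDerivAt.comp_hasDerivAt t
      ((hasDerivAt_const t a).prodMk (hasDerivAt_id t)))
    (by have := hW.continuous_fderiv one_ne_zero; fun_prop) (lt_sub_iff_add_lt'.2 hp) (hW₀ _ ?_)
  have ha : a ^ 2 ≤ 1 := by nlinarith [hp.out]
  simp [Real.sq_sqrt (sub_nonneg.2 ha)]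

theorem Continuous.memLp_two_unitDisk {f : ℝ × ℝ → ℝ} (hf : Continuous f) :
    MemLp f 2 (volume.restrict unitDisk) :=
  (memLp_two_iff_integrable_sq hf.aestronglyMeasurable).2
    (by fun_prop : Continuous (f · ^ 2)).integrableOn_unitDisk

theorem setIntegral_unitDisk_pow_four_le_mul {W : ℝ × ℝ → ℝ} (hW : ContDiff ℝ 1 W)
    (hW₀ : ∀ p : ℝ × ℝ, p.1 ^ 2 + p.2 ^ 2 = 1 → W p = 0) :
    ∫ p in unitDisk, W p ^ 4 ≤ (∫ p in unitDisk, 2 * |W p| * |fderiv ℝ W p (1, 0)|) *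
      ∫ p in unitDisk, 2 * |W p| * |fderiv ℝ W p (0, 1)| := by
  have hWc := hW.continuous
  have hW' := hW.continuous_fderiv one_ne_zero
  have hφ := (by fun_prop : Continuous fun q => 2 * |W q| * |fderiv ℝ W q (1, 0)|)
    |>.integrableOn_unitDisk.integrable_indicator measurableSet_unitDisk
  have hψ := (by fun_prop : Continuous fun q => 2 * |W q| * |fderiv ℝ W q (0, 1)|)
    |>.integrableOn_unitDisk.integrable_indicator measurableSet_unitDisk
  have h := setIntegral_pow_four_le_mul measurableSet_unitDisk hφ hψ
    (indicator_nonneg fun q _ => by positivity) (indicator_nonneg fun q _ => by positivity)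
    (fun p hp => sq_le_integral_indicator_unitDisk_horizontal hW hW₀ hp)
    (fun p hp => sq_le_integral_indicator_unitDisk_vertical hW hW₀ hp)
  rwa [← Measure.volume_eq_prod, integral_indicator measurableSet_unitDisk,
    integral_indicator measurableSet_unitDisk] at h

theorem setIntegral_unitDisk_pow_four_le {W : ℝ × ℝ → ℝ} (hW : ContDiff ℝ 1 W)
    (hW₀ : ∀ p : ℝ × ℝ, p.1 ^ 2 + p.2 ^ 2 = 1 → W p = 0) :
    ∫ p in unitDisk, W p ^ 4 ≤ 2 * (∫ p in unitDisk, W p ^ 2) *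
      ∫ p in unitDisk, (fderiv ℝ W p (1, 0) ^ 2 + fderiv ℝ W p (0, 1) ^ 2) := by
  have hW' := hW.continuous_fderiv one_ne_zero
  set A := ∫ p in unitDisk, W p ^ 2
  set B := ∫ p in unitDisk, fderiv ℝ W p (1, 0) ^ 2
  set C := ∫ p in unitDisk, fderiv ℝ W p (0, 1) ^ 2
  have hCS {f : ℝ × ℝ → ℝ} (hf : Continuous f) :
      ∫ p in unitDisk, 2 * |W p| * |f p| ≤ 2 * (√A * √(∫ p in unitDisk, f p ^ 2)) := by
    simp_rw [mul_assoc]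
    rw [integral_const_mul]
    gcongr
    exact integral_abs_mul_abs_le_sqrt_mul_sqrt hW.continuous.memLp_two_unitDisk
      hf.memLp_two_unitDisk
  have hBC : ∫ p in unitDisk, (fderiv ℝ W p (1, 0) ^ 2 + fderiv ℝ W p (0, 1) ^ 2) = B + C :=
    integral_add (by fun_prop : Continuous (fderiv ℝ W · (1, 0) ^ 2)).integrableOn_unitDisk
      (by fun_prop : Continuous (fderiv ℝ W · (0, 1) ^ 2)).integrableOn_unitDisk
  have hA : 0 ≤ A := integral_nonneg fun p => sq_nonneg _
  have hB : 0 ≤ B := integral_nonneg fun p => sq_nonneg _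
  have hC : 0 ≤ C := integral_nonneg fun p => sq_nonneg _
  calc ∫ p in unitDisk, W p ^ 4
      ≤ (∫ p in unitDisk, 2 * |W p| * |fderiv ℝ W p (1, 0)|) *
          ∫ p in unitDisk, 2 * |W p| * |fderiv ℝ W p (0, 1)| :=
        setIntegral_unitDisk_pow_four_le_mul hW hW₀
    _ ≤ (2 * (√A * √B)) * (2 * (√A * √C)) :=
        mul_le_mul (hCS (by fun_prop)) (hCS (by fun_prop))
          (integral_nonneg fun p => by positivity) (by positivity)
    _ = 2 * A * (2 * √B * √C) := by
        linear_combination 4 * √B * √C * Real.mul_self_sqrt hA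
    _ ≤ 2 * A * (B + C) := by
        gcongr
        simpa [Real.sq_sqrt hB, Real.sq_sqrt hC] using two_mul_le_add_sq √B √C
    _ = _ := by rw [hBC]

noncomputable def planeEmbedding : ℝ × ℝ →L[ℝ] (Fin 3 → ℝ) :=
  ContinuousLinearMap.pi ![ContinuousLinearMap.fst ℝ ℝ ℝ, ContinuousLinearMap.snd ℝ ℝ ℝ, 0]

theorem planeEmbedding_apply (p : ℝ × ℝ) : planeEmbedding p = ![p.1, p.2, 0] := by
  funext i
  fin_cases i <;> rfl

noncomputable def planeRotation (θ : ℝ) : ℝ × ℝ ≃ᵐ ℝ × ℝ :=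
  (Complex.measurableEquivRealProd.symm.trans
    (rotation (Circle.exp (-θ))).toHomeomorph.toMeasurableEquiv).trans
    Complex.measurableEquivRealProd

theorem planeRotation_apply (θ : ℝ) (p : ℝ × ℝ) :
    planeRotation θ p = (p.1 * cos θ + p.2 * sin θ, -p.1 * sin θ + p.2 * cos θ) := by
  simp only [planeRotation, MeasurableEquiv.trans_apply, Homeomorph.toMeasurableEquiv_coe,
    LinearIsometryEquiv.coe_toHomeomorph, Complex.measurableEquivRealProd_symm_apply,
    rotation_apply, Circle.coe_exp, Complex.measurableEquivRealProd_apply, Complex.mul_re,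
    Complex.mul_im, Complex.exp_ofReal_mul_I_re, Complex.exp_ofReal_mul_I_im, cos_neg, sin_neg]
  ext <;> ring

theorem measurePreserving_planeRotation (θ : ℝ) : MeasurePreserving (planeRotation θ) :=
  (Complex.volume_preserving_equiv_real_prod.comp
    (rotation (Circle.exp (-θ))).measurePreserving).comp
    (Complex.volume_preserving_equiv_real_prod.symm _)

theorem planeRotation_preimage_unitDisk (θ : ℝ) : planeRotation θ ⁻¹' unitDisk = unitDisk := by
  ext p
  simp only [unitDisk, mem_preimage, mem_ofPred_eq, planeRotation_apply]
  have h := sin_sq_add_cos_sq θ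
  constructor <;> intro hp <;> nlinarith

theorem helS_vec_zero (θ : ℝ) (p : ℝ × ℝ) :
    helS θ ![p.1, p.2, 0] = ![(planeRotation θ p).1, (planeRotation θ p).2, θ] := by
  simp [helS, planeRotation_apply]

theorem setIntegral_unitDisk_slice_eq {v : (Fin 3 → ℝ) → ℝ} (hv : ∀ θ x, v (helS θ x) = v x)
    (z : ℝ) : ∫ p in unitDisk, v ![p.1, p.2, z] = ∫ p in unitDisk, v ![p.1, p.2, 0] := by
  simp_rw [← hv z ![_, _, 0], helS_vec_zero]
  rw [← (measurePreserving_planeRotation z).setIntegral_preimage_emb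
    (planeRotation z).measurableEmbedding, planeRotation_preimage_unitDisk]

noncomputable def cylinderCoords : (Fin 3 → ℝ) ≃ᵐ ℝ × (ℝ × ℝ) :=
  (MeasurableEquiv.piFinSuccAbove (fun _ => ℝ) 2).trans
    ((MeasurableEquiv.refl ℝ).prodCongr MeasurableEquiv.finTwoArrow)

theorem cylinderCoords_symm_apply (q : ℝ × (ℝ × ℝ)) :
    cylinderCoords.symm q = ![q.2.1, q.2.2, q.1] := by
  funext i
  fin_cases i <;> rfl

theorem measurePreserving_cylinderCoords_symm :
    MeasurePreserving cylinderCoords.symm (volume.prod (volume.prod volume)) volume :=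
  (((MeasurePreserving.id volume).prod (volume_preserving_finTwoArrow ℝ)).comp
    (volume_preserving_piFinSuccAbove (fun _ : Fin 3 => ℝ) 2)).symm _

theorem cylinderCoords_symm_preimage_helD :
    cylinderCoords.symm ⁻¹' helD = Ioo 0 (2 * π) ×ˢ unitDisk := by
  ext q
  simp [helD, unitDisk, cylinderCoords_symm_apply]
  tauto

theorem setIntegral_helD_eq_two_pi_mul {v : (Fin 3 → ℝ) → ℝ} (hv : Continuous v)
    (hinv : ∀ θ x, v (helS θ x) = v x) :
    ∫ x in helD, v x = 2 * π * ∫ p in unitDisk, v (planeEmbedding p) := by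
  simp_rw [planeEmbedding_apply]
  have hcont : Continuous fun q : ℝ × (ℝ × ℝ) => v ![q.2.1, q.2.2, q.1] :=
    hv.comp (continuous_pi fun i => by fin_cases i <;> fun_prop)
  have hint : IntegrableOn (fun q : ℝ × (ℝ × ℝ) => v ![q.2.1, q.2.2, q.1])
      (Ioo 0 (2 * π) ×ˢ unitDisk) (volume.prod (volume.prod volume)) := by
    rw [← Measure.volume_eq_prod]
    exact (hcont.continuousOn.integrableOn_compact (isCompact_Icc.prod isCompact_Icc)).mono_set
      (prod_mono Ioo_subset_Icc_self unitDisk_subset_Icc)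
  rw [← measurePreserving_cylinderCoords_symm.setIntegral_preimage_emb
    cylinderCoords.symm.measurableEmbedding, cylinderCoords_symm_preimage_helD]
  simp_rw [cylinderCoords_symm_apply]
  rw [setIntegral_prod _ hint]
  simp_rw [← Measure.volume_eq_prod, setIntegral_unitDisk_slice_eq hinv]
  rw [setIntegral_const, Real.volume_real_Ioo_of_le two_pi_pos.le, sub_zero, smul_eq_mul]

noncomputable def helRot (θ : ℝ) : (Fin 3 → ℝ) →L[ℝ] (Fin 3 → ℝ) :=
  ContinuousLinearMap.pi ![cos θ • .proj 0 + sin θ • .proj 1, -sin θ • .proj 0 + cos θ • .proj 1,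
    .proj 2]

theorem helS_eq_helRot_add (θ : ℝ) : helS θ = fun x => helRot θ x + ![0, 0, θ] := by
  funext x i
  fin_cases i <;> simp [helS, helRot] <;> ring

theorem helRot_single_zero (θ : ℝ) :
    helRot θ (Pi.single 0 1) = cos θ • Pi.single 0 1 - sin θ • Pi.single 1 1 := by
  funext i
  fin_cases i <;> simp [helRot]

theorem helRot_single_one (θ : ℝ) :
    helRot θ (Pi.single 1 1) = sin θ • Pi.single 0 1 + cos θ • Pi.single 1 1 := by
  funext i
  fin_cases i <;> simp [helRot]

noncomputable def horizGradSq (u : (Fin 3 → ℝ) → ℝ) (x : Fin 3 → ℝ) : ℝ :=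
  fderiv ℝ u x (Pi.single 0 1) ^ 2 + fderiv ℝ u x (Pi.single 1 1) ^ 2

theorem horizGradSq_helS {u : (Fin 3 → ℝ) → ℝ} (hu : Differentiable ℝ u)
    (hinv : ∀ θ x, u (helS θ x) = u x) (θ : ℝ) (x : Fin 3 → ℝ) :
    horizGradSq u (helS θ x) = horizGradSq u x := by
  have hchain : fderiv ℝ u x = (fderiv ℝ u (helS θ x)).comp (helRot θ) := by
    have h : HasFDerivAt (helS θ) (helRot θ) x := by
      rw [helS_eq_helRot_add]
      exact (helRot θ).hasFDerivAt.add_const _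
    rw [← ((hu _).hasFDerivAt.comp x h).fderiv, show u ∘ helS θ = u from funext (hinv θ)]
  simp only [horizGradSq, hchain, ContinuousLinearMap.comp_apply, helRot_single_zero,
    helRot_single_one, map_add, map_sub, map_smul, smul_eq_mul]
  linear_combination (-(fderiv ℝ u (helS θ x) (Pi.single 0 1) ^ 2 +
    fderiv ℝ u (helS θ x) (Pi.single 1 1) ^ 2)) * sin_sq_add_cos_sq θ

theorem horizGradSq_planeEmbedding {u : (Fin 3 → ℝ) → ℝ} (hu : Differentiable ℝ u)
    (p : ℝ × ℝ) : horizGradSq u (planeEmbedding p) =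
      fderiv ℝ (u ∘ planeEmbedding) p (1, 0) ^ 2 + fderiv ℝ (u ∘ planeEmbedding) p (0, 1) ^ 2 := by
  have e₀ : planeEmbedding (1, 0) = Pi.single 0 1 := by
    rw [planeEmbedding_apply]; funext i; fin_cases i <;> simp
  have e₁ : planeEmbedding (0, 1) = Pi.single 1 1 := by
    rw [planeEmbedding_apply]; funext i; fin_cases i <;> simp
  rw [((hu _).hasFDerivAt.comp p planeEmbedding.hasFDerivAt).fderiv, horizGradSq]
  simp only [ContinuousLinearMap.comp_apply, e₀, e₁]

theorem mul_rpow_le_of_le_two_mul_mul {k a b c r : ℝ} (hk : 2 ≤ k) (ha : 0 ≤ a) (hb : 0 ≤ b)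
    (hc : 0 ≤ c) (hr : 0 ≤ r) (h : a ≤ 2 * b * c) : (k * a) ^ r ≤ (k * b) ^ r * (k * c) ^ r := by
  rw [← Real.mul_rpow (by positivity) (by positivity)]
  refine Real.rpow_le_rpow (by positivity) ?_ hr
  calc k * a ≤ k * (2 * b * c) := by gcongr
    _ ≤ k * (k * b * c) := by gcongr
    _ = k * b * (k * c) := by ring

/-- Ladyzhenskaya-type inequality for helical functions on `D = B₁ × (0,2π)`
vanishing on the lateral boundary:
`‖u‖_{L⁴(D)} ≤ C ‖u‖_{L²(D)}^{1/2} ‖∇_h u‖_{L²(D)}^{1/2}`. -/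
theorem ladyzhenskaya_helical :
    ∃ C : ℝ, 0 < C ∧ ∀ u : (Fin 3 → ℝ) → ℝ, ContDiff ℝ 1 u →
      (∀ (θ : ℝ) (x : Fin 3 → ℝ), u (helS θ x) = u x) →
      (∀ x : Fin 3 → ℝ, x 0 ^ 2 + x 1 ^ 2 = 1 → u x = 0) →
      (∫ x in helD, (u x) ^ 4) ^ ((1 : ℝ) / 4) ≤
        C * (∫ x in helD, (u x) ^ 2) ^ ((1 : ℝ) / 4) *
          (∫ x in helD,
            ((fderiv ℝ u x (Pi.single 0 1)) ^ 2 +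
              (fderiv ℝ u x (Pi.single 1 1)) ^ 2)) ^ ((1 : ℝ) / 4) := by
  refine ⟨1, one_pos, fun u hu hinv hbc => ?_⟩
  have hu₁ : Differentiable ℝ u := hu.differentiable one_ne_zero
  have hgrad : Continuous (horizGradSq u) := by
    have := hu.continuous_fderiv one_ne_zero
    unfold horizGradSq
    fun_prop
  have hW : ContDiff ℝ 1 (u ∘ planeEmbedding) := hu.comp planeEmbedding.contDiff
  have hW₀ (p : ℝ × ℝ) (hp : p.1 ^ 2 + p.2 ^ 2 = 1) : (u ∘ planeEmbedding) p = 0 :=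
    hbc _ (by simpa [planeEmbedding_apply] using hp)
  change _ ≤ _ * _ * (∫ x in helD, horizGradSq u x) ^ _
  rw [one_mul, setIntegral_helD_eq_two_pi_mul (v := (u · ^ 4)) (by fun_prop) (by simp [hinv]),
    setIntegral_helD_eq_two_pi_mul (v := (u · ^ 2)) (by fun_prop) (by simp [hinv]),
    setIntegral_helD_eq_two_pi_mul hgrad (horizGradSq_helS hu₁ hinv)]
  simp_rw [horizGradSq_planeEmbedding hu₁]
  exact mul_rpow_le_of_le_two_mul_mul (by linarith [pi_gt_three])
    (integral_nonneg fun _ => by positivity) (integral_nonneg fun _ => by positivity)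
    (integral_nonneg fun _ => by positivity) (by norm_num) (setIntegral_unitDisk_pow_four_le hW hW₀)
end
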